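/- arXiv:2302.08438 — 6 statements merged into one kernel-verified Lean document; each statement's English description precedes it below -/
import Mathlib

section
/- Let n ≥ 2, let L be an n×n real symmetric positive semidefinite matrix with L𝟙 = 0, and let λ₂ > 0 be such that x*Lx ≥ λ₂‖x‖² for every complex vector x orthogonal to 𝟙 (λ₂ is a lower bound on the second-smallest eigenvalue of L). Let z₁,…,zₙ ∈ ℂ (the values gᵢ⁻¹(s₀)) satisfy |zᵢ| ≤ M₂ for all i, suppose ∑ᵢ zᵢ ≠ 0, and let ḡ := ((1/n)∑ᵢ zᵢ)⁻¹ satisfy |ḡ| ≤ M₁, where M₁, M₂ > 0. Let φ ∈ ℂ (the value f(s₀)). If |φ|·λ₂ > M₂ + M₁M₂², then the complex matrix A := diag(z₁,…,zₙ) + φ·L (with L coerced to ℂ) is invertible and ‖A⁻¹ − (ḡ/n)·𝟙𝟙ᵀ‖ ≤ (M₁M₂ + 1)² / (|φ|λ₂ − M₂ − M₁M₂²). -/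
/-! Write x = a𝟙 + v with v ⊥ 𝟙 and put y = Ax. As L𝟙 = 0 and 𝟙ᵀL = 0, pairing y with v gives
|φ|λ₂‖v‖² ≤ ‖v‖(‖y‖ + M₂‖x‖), and pairing y with 𝟙 gives a∑zᵢ = ∑yᵢ − ∑zᵢvᵢ, hence
|a|√n ≤ M₁(‖y‖ + M₂‖v‖). Together: (|φ|λ₂ − M₂ − M₁M₂²)‖v‖ ≤ (1 + M₁M₂)‖y‖, so A is injective.
Finally A⁻¹y − (ḡ/n)𝟙𝟙ᵀy = v − (ḡ/n)(∑zᵢvᵢ)𝟙, whose norm is at most (1 + M₁M₂)‖v‖. -/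

open Matrix Complex

/-- Spectral norm (L2 operator norm) of a complex matrix. -/
noncomputable def specNorm {n : ℕ} (A : Matrix (Fin n) (Fin n) ℂ) : ℝ :=
  ‖Matrix.toEuclideanCLM (𝕜 := ℂ) A‖

/-- The all-ones matrix. -/
def allOnes (n : ℕ) : Matrix (Fin n) (Fin n) ℂ := Matrix.of fun _ _ => 1

open scoped InnerProductSpace

section

-- `e`, `D`, `K` play the roles of 𝟙, diag(z) and L, so that `⟪e, D e⟫_ℂ = ∑ zᵢ = n / ḡ`.
variable {E : Type*} [NormedAddCommGroup E] [InnerProductSpace ℂ E]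
  {D K : E →L[ℂ] E} {e : E} {φ : ℂ} {lam M₁ M₂ : ℝ}

theorem norm_mul_mul_norm_sq_le_of_gap (hKe : K e = 0)
    (hgap : ∀ v, ⟪e, v⟫_ℂ = 0 → lam * ‖v‖ ^ 2 ≤ re ⟪v, K v⟫_ℂ)
    (hD : ∀ x, ‖D x‖ ≤ M₂ * ‖x‖) {v : E} (hv : ⟪e, v⟫_ℂ = 0) (a : ℂ) :
    ‖φ‖ * lam * ‖v‖ ^ 2 ≤ ‖v‖ * (‖(D + φ • K) (v + a • e)‖ + M₂ * ‖v + a • e‖) := by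
  set x := v + a • e
  have hsplit : φ * ⟪v, K v⟫_ℂ = ⟪v, (D + φ • K) x⟫_ℂ - ⟪v, D x⟫_ℂ := by
    simp [x, hKe]
  calc ‖φ‖ * lam * ‖v‖ ^ 2 = ‖φ‖ * (lam * ‖v‖ ^ 2) := by ring
    _ ≤ ‖φ‖ * ‖⟪v, K v⟫_ℂ‖ := by gcongr; exact (hgap v hv).trans (re_le_norm _)
    _ = ‖⟪v, (D + φ • K) x⟫_ℂ - ⟪v, D x⟫_ℂ‖ := by rw [← hsplit, norm_mul]
    _ ≤ ‖v‖ * ‖(D + φ • K) x‖ + ‖v‖ * (M₂ * ‖x‖) := by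
        refine (norm_sub_le _ _).trans (add_le_add (norm_inner_le_norm _ _) ?_)
        exact (norm_inner_le_norm _ _).trans (by gcongr; exact hD x)
    _ = _ := by ring

theorem inner_apply_add_smul (hKadj : ∀ x, ⟪e, K x⟫_ℂ = 0) (v : E) (a : ℂ) :
    ⟪e, (D + φ • K) (v + a • e)⟫_ℂ = ⟪e, D v⟫_ℂ + a * ⟪e, D e⟫_ℂ := by
  simp [hKadj]

theorem norm_coeff_mul_norm_le (hKadj : ∀ x, ⟪e, K x⟫_ℂ = 0)
    (he : ‖e‖ ^ 2 ≤ M₁ * ‖⟪e, D e⟫_ℂ‖) (hM₁ : 0 ≤ M₁) (v : E) (a : ℂ) :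
    ‖a‖ * ‖e‖ ≤ M₁ * (‖(D + φ • K) (v + a • e)‖ + ‖D v‖) := by
  rcases eq_or_ne e 0 with rfl | he0
  · simp only [norm_zero, mul_zero]; positivity
  have hσ : a * ⟪e, D e⟫_ℂ = ⟪e, (D + φ • K) (v + a • e)⟫_ℂ - ⟪e, D v⟫_ℂ := by
    rw [inner_apply_add_smul hKadj]; ring
  have hbound : ‖a‖ * ‖e‖ * ‖e‖ ≤ M₁ * (‖(D + φ • K) (v + a • e)‖ + ‖D v‖) * ‖e‖ :=
    calc ‖a‖ * ‖e‖ * ‖e‖ = ‖a‖ * ‖e‖ ^ 2 := by ring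
      _ ≤ ‖a‖ * (M₁ * ‖⟪e, D e⟫_ℂ‖) := by gcongr
      _ = M₁ * ‖⟪e, (D + φ • K) (v + a • e)⟫_ℂ - ⟪e, D v⟫_ℂ‖ := by rw [← hσ, norm_mul]; ring
      _ ≤ M₁ * (‖e‖ * ‖(D + φ • K) (v + a • e)‖ + ‖e‖ * ‖D v‖) := by
        gcongr
        exact (norm_sub_le _ _).trans (add_le_add (norm_inner_le_norm _ _) (norm_inner_le_norm _ _))
      _ = _ := by ring
  exact le_of_mul_le_mul_right hbound (norm_pos_iff.2 he0)

theorem norm_orthogonal_le_of_gap (hKe : K e = 0) (hKadj : ∀ x, ⟪e, K x⟫_ℂ = 0)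
    (hgap : ∀ v, ⟪e, v⟫_ℂ = 0 → lam * ‖v‖ ^ 2 ≤ re ⟪v, K v⟫_ℂ)
    (hD : ∀ x, ‖D x‖ ≤ M₂ * ‖x‖) (he : ‖e‖ ^ 2 ≤ M₁ * ‖⟪e, D e⟫_ℂ‖)
    (hM₁ : 0 ≤ M₁) (hM₂ : 0 ≤ M₂) {v : E} (hv : ⟪e, v⟫_ℂ = 0) (a : ℂ) :
    (‖φ‖ * lam - M₂ - M₁ * M₂ ^ 2) * ‖v‖ ≤ (1 + M₁ * M₂) * ‖(D + φ • K) (v + a • e)‖ := by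
  set y := (D + φ • K) (v + a • e)
  have hquad := norm_mul_mul_norm_sq_le_of_gap (φ := φ) hKe hgap hD hv a
  have hmean := norm_coeff_mul_norm_le (φ := φ) hKadj he hM₁ v a
  have hx : ‖v + a • e‖ ≤ ‖v‖ + ‖a‖ * ‖e‖ := (norm_add_le _ _).trans_eq (by rw [norm_smul])
  have hM₂v : 0 ≤ M₂ * ‖v‖ := by positivity
  have key : ‖v‖ * ((‖φ‖ * lam - M₂ - M₁ * M₂ ^ 2) * ‖v‖) ≤ ‖v‖ * ((1 + M₁ * M₂) * ‖y‖) := by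
    nlinarith [mul_le_mul_of_nonneg_left hx hM₂v, mul_le_mul_of_nonneg_left hmean hM₂v,
      mul_le_mul_of_nonneg_left (hD v) (mul_nonneg hM₁ hM₂v)]
  rcases (norm_nonneg v).eq_or_lt with hv0 | hv0
  · rw [← hv0, mul_zero]; positivity
  · exact le_of_mul_le_mul_left key hv0

theorem norm_sub_inner_div_smul_le (hD : ∀ x, ‖D x‖ ≤ M₂ * ‖x‖)
    (he : ‖e‖ ^ 2 ≤ M₁ * ‖⟪e, D e⟫_ℂ‖) (hσ : ⟪e, D e⟫_ℂ ≠ 0) (hM₂ : 0 ≤ M₂) (v : E) :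
    ‖v - (⟪e, D v⟫_ℂ / ⟪e, D e⟫_ℂ) • e‖ ≤ (1 + M₁ * M₂) * ‖v‖ := by
  have hσ' : 0 < ‖⟪e, D e⟫_ℂ‖ := norm_pos_iff.2 hσ
  have hcorr : ‖(⟪e, D v⟫_ℂ / ⟪e, D e⟫_ℂ) • e‖ ≤ M₁ * M₂ * ‖v‖ := by
    rw [norm_smul, norm_div, div_mul_eq_mul_div, div_le_iff₀ hσ']
    calc ‖⟪e, D v⟫_ℂ‖ * ‖e‖ ≤ ‖e‖ * (M₂ * ‖v‖) * ‖e‖ := by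
          gcongr; exact (norm_inner_le_norm _ _).trans (by gcongr; exact hD v)
      _ = M₂ * ‖v‖ * ‖e‖ ^ 2 := by ring
      _ ≤ M₂ * ‖v‖ * (M₁ * ‖⟪e, D e⟫_ℂ‖) := by gcongr
      _ = _ := by ring
  calc _ ≤ ‖v‖ + ‖(⟪e, D v⟫_ℂ / ⟪e, D e⟫_ℂ) • e‖ := norm_sub_le _ _
    _ ≤ _ := by linarith

theorem norm_sub_inner_div_smul_le_of_gap (hKe : K e = 0) (hKadj : ∀ x, ⟪e, K x⟫_ℂ = 0)
    (hgap : ∀ v, ⟪e, v⟫_ℂ = 0 → lam * ‖v‖ ^ 2 ≤ re ⟪v, K v⟫_ℂ)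
    (hD : ∀ x, ‖D x‖ ≤ M₂ * ‖x‖) (he : ‖e‖ ^ 2 ≤ M₁ * ‖⟪e, D e⟫_ℂ‖) (hσ : ⟪e, D e⟫_ℂ ≠ 0)
    (hM₁ : 0 ≤ M₁) (hM₂ : 0 ≤ M₂) (hcond : M₂ + M₁ * M₂ ^ 2 < ‖φ‖ * lam) (x : E) :
    (‖φ‖ * lam - M₂ - M₁ * M₂ ^ 2) * ‖x - (⟪e, (D + φ • K) x⟫_ℂ / ⟪e, D e⟫_ℂ) • e‖
      ≤ (M₁ * M₂ + 1) ^ 2 * ‖(D + φ • K) x‖ := by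
  obtain ⟨_, ha, v, hv, rfl⟩ := (ℂ ∙ e).exists_add_mem_mem_orthogonal x
  obtain ⟨a, rfl⟩ := Submodule.mem_span_singleton.1 ha
  rw [Submodule.mem_orthogonal_singleton_iff_inner_right] at hv
  have hrem : a • e + v - (⟪e, (D + φ • K) (a • e + v)⟫_ℂ / ⟪e, D e⟫_ℂ) • e
      = v - (⟪e, D v⟫_ℂ / ⟪e, D e⟫_ℂ) • e := by
    rw [add_comm (a • e), inner_apply_add_smul hKadj, add_div, mul_div_cancel_right₀ _ hσ,
      add_smul]
    abel
  rw [hrem, add_comm (a • e)]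
  calc _ ≤ (‖φ‖ * lam - M₂ - M₁ * M₂ ^ 2) * ((1 + M₁ * M₂) * ‖v‖) := by
        gcongr
        · linarith
        · exact norm_sub_inner_div_smul_le hD he hσ hM₂ v
    _ = (1 + M₁ * M₂) * ((‖φ‖ * lam - M₂ - M₁ * M₂ ^ 2) * ‖v‖) := by ring
    _ ≤ (1 + M₁ * M₂) * ((1 + M₁ * M₂) * ‖(D + φ • K) (v + a • e)‖) := by
        have := norm_orthogonal_le_of_gap (φ := φ) hKe hKadj hgap hD he hM₁ hM₂ hv a
        gcongr
    _ = _ := by ring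

end

section
variable {ι : Type*} [Fintype ι]

def onesVec (ι : Type*) : EuclideanSpace ℂ ι := WithLp.toLp 2 1

theorem inner_onesVec_left (x : EuclideanSpace ℂ ι) : ⟪onesVec ι, x⟫_ℂ = ∑ i, x i := by
  simp [onesVec, PiLp.inner_apply]

theorem norm_onesVec_sq : ‖onesVec ι‖ ^ 2 = Fintype.card ι := by
  simp [onesVec, EuclideanSpace.norm_sq_eq]

theorem toEuclideanCLM_allOnes {n : ℕ} (y : EuclideanSpace ℂ (Fin n)) :
    toEuclideanCLM (𝕜 := ℂ) (allOnes n) y = ⟪onesVec (Fin n), y⟫_ℂ • onesVec (Fin n) := by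
  rw [inner_onesVec_left]
  ext i
  simp [allOnes, mulVec, dotProduct, onesVec]

theorem map_ofReal_mulVec_one {L : Matrix ι ι ℝ} (hL1 : L *ᵥ 1 = 0) : L.map ofReal *ᵥ 1 = 0 := by
  ext i
  simpa [mulVec, dotProduct] using congrArg ofReal (congrFun hL1 i)

variable [DecidableEq ι]

theorem inner_onesVec_toEuclideanCLM_diagonal (z : ι → ℂ) :
    ⟪onesVec ι, toEuclideanCLM (𝕜 := ℂ) (diagonal z) (onesVec ι)⟫_ℂ = ∑ i, z i := by
  rw [inner_onesVec_left]
  simp [onesVec, mulVec_diagonal]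

theorem norm_toEuclideanCLM_diagonal_le {z : ι → ℂ} {M : ℝ} (hz : ∀ i, ‖z i‖ ≤ M) (hM : 0 ≤ M)
    (x : EuclideanSpace ℂ ι) : ‖toEuclideanCLM (𝕜 := ℂ) (diagonal z) x‖ ≤ M * ‖x‖ := by
  refine le_of_sq_le_sq ?_ (by positivity)
  simp only [mul_pow, EuclideanSpace.norm_sq_eq, ofLp_toEuclideanCLM, mulVec_diagonal, norm_mul,
    Finset.mul_sum]
  gcongr with i
  exact hz i

theorem inner_toEuclideanCLM_self (A : Matrix ι ι ℂ) (x : EuclideanSpace ℂ ι) :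
    ⟪x, toEuclideanCLM (𝕜 := ℂ) A x⟫_ℂ = star x.ofLp ⬝ᵥ A *ᵥ x.ofLp := by
  rw [EuclideanSpace.inner_eq_star_dotProduct, dotProduct_comm, ofLp_toEuclideanCLM]

variable {L : Matrix ι ι ℝ}

theorem toEuclideanCLM_map_ofReal_onesVec (hL1 : L *ᵥ 1 = 0) :
    toEuclideanCLM (𝕜 := ℂ) (L.map ofReal) (onesVec ι) = 0 := by
  simp [onesVec, map_ofReal_mulVec_one hL1]

theorem inner_onesVec_toEuclideanCLM_map_ofReal (hL : L.IsSymm) (hL1 : L *ᵥ 1 = 0)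
    (x : EuclideanSpace ℂ ι) : ⟪onesVec ι, toEuclideanCLM (𝕜 := ℂ) (L.map ofReal) x⟫_ℂ = 0 := by
  rw [inner_onesVec_left, ofLp_toEuclideanCLM, ← one_dotProduct, dotProduct_mulVec,
    ← mulVec_transpose, (hL.map ofReal).eq, map_ofReal_mulVec_one hL1, zero_dotProduct]

theorem norm_sub_inner_div_smul_le_of_laplacian (hL : L.IsSymm) (hL1 : L *ᵥ 1 = 0) {lam : ℝ}
    (hgap : ∀ x : ι → ℂ, ∑ i, x i = 0 →
      lam * ∑ i, ‖x i‖ ^ 2 ≤ (star x ⬝ᵥ L.map ofReal *ᵥ x).re)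
    {z : ι → ℂ} {M₁ M₂ : ℝ} (hz : ∀ i, ‖z i‖ ≤ M₂) (hsum : ∑ i, z i ≠ 0)
    (hcard : (Fintype.card ι : ℝ) ≤ M₁ * ‖∑ i, z i‖) (hM₁ : 0 ≤ M₁) (hM₂ : 0 ≤ M₂) {φ : ℂ}
    (hcond : M₂ + M₁ * M₂ ^ 2 < ‖φ‖ * lam) (x : EuclideanSpace ℂ ι) :
    (‖φ‖ * lam - M₂ - M₁ * M₂ ^ 2) * ‖x - (⟪onesVec ι, toEuclideanCLM (𝕜 := ℂ)
        (diagonal z + φ • L.map ofReal) x⟫_ℂ / ∑ i, z i) • onesVec ι‖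
      ≤ (M₁ * M₂ + 1) ^ 2 * ‖toEuclideanCLM (𝕜 := ℂ) (diagonal z + φ • L.map ofReal) x‖ := by
  have hσ := inner_onesVec_toEuclideanCLM_diagonal z
  rw [map_add, map_smul, ← hσ]
  refine norm_sub_inner_div_smul_le_of_gap (toEuclideanCLM_map_ofReal_onesVec hL1)
    (inner_onesVec_toEuclideanCLM_map_ofReal hL hL1) (fun v hv => ?_)
    (norm_toEuclideanCLM_diagonal_le hz hM₂) (by rwa [norm_onesVec_sq, hσ]) (hσ ▸ hsum)
    hM₁ hM₂ hcond x
  rw [inner_onesVec_left] at hv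
  rw [inner_toEuclideanCLM_self, EuclideanSpace.norm_sq_eq]
  exact hgap v.ofLp hv

end

section
variable {ι : Type*} [Fintype ι] [DecidableEq ι] {A : Matrix ι ι ℂ}

theorem isUnit_of_forall_toEuclideanCLM_apply_eq_zero (h : ∀ x, toEuclideanCLM (𝕜 := ℂ) A x = 0 → x = 0) :
    IsUnit A := by
  refine mulVec_injective_iff_isUnit.1 fun x y hxy => ?_
  simpa [sub_eq_zero] using h (WithLp.toLp 2 (x - y)) (by simp [hxy])

theorem toEuclideanCLM_apply_toEuclideanCLM_inv (hA : IsUnit A) (y : EuclideanSpace ℂ ι) :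
    toEuclideanCLM (𝕜 := ℂ) A (toEuclideanCLM (𝕜 := ℂ) A⁻¹ y) = y := by
  change (toEuclideanCLM (𝕜 := ℂ) A * toEuclideanCLM (𝕜 := ℂ) A⁻¹) y = y
  rw [← map_mul, mul_nonsing_inv _ ((isUnit_iff_isUnit_det A).1 hA), map_one]
  rfl

end

theorem stmt_0_general {n : ℕ} (hn : 2 ≤ n)
    (L : Matrix (Fin n) (Fin n) ℝ) (hL : L.PosSemidef)
    (hL1 : L.mulVec (fun _ => 1) = 0)
    (lam2 : ℝ)
    (hgap : ∀ x : Fin n → ℂ, (∑ i, x i = 0) →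
      lam2 * ∑ i, ‖x i‖ ^ 2 ≤ (star x ⬝ᵥ (L.map (Complex.ofReal)).mulVec x).re)
    (z : Fin n → ℂ) (M₁ M₂ : ℝ)
    (hz : ∀ i, ‖z i‖ ≤ M₂) (hsum : ∑ i, z i ≠ 0)
    (gbar : ℂ) (hgbar : gbar = ((n : ℂ)⁻¹ * ∑ i, z i)⁻¹) (hgbarbd : ‖gbar‖ ≤ M₁)
    (φ : ℂ) (hcond : M₂ + M₁ * M₂ ^ 2 < ‖φ‖ * lam2) :
    IsUnit (Matrix.diagonal z + φ • L.map (Complex.ofReal)) ∧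
      specNorm ((Matrix.diagonal z + φ • L.map (Complex.ofReal))⁻¹
          - (gbar / n) • allOnes n)
        ≤ (M₁ * M₂ + 1) ^ 2 / (‖φ‖ * lam2 - M₂ - M₁ * M₂ ^ 2) := by
  set A := diagonal z + φ • L.map ofReal
  have hn0 : (n : ℂ) ≠ 0 := by exact_mod_cast (by omega : n ≠ 0)
  have hM₁ : 0 ≤ M₁ := (norm_nonneg gbar).trans hgbarbd
  have hM₂ : 0 ≤ M₂ := (norm_nonneg _).trans (hz ⟨0, by omega⟩)
  have hcard : (Fintype.card (Fin n) : ℝ) ≤ M₁ * ‖∑ i, z i‖ := by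
    rw [Fintype.card_fin]
    rwa [hgbar, norm_inv, norm_mul, norm_inv, Complex.norm_natCast, inv_mul_eq_div, inv_div,
      div_le_iff₀ (norm_pos_iff.2 hsum)] at hgbarbd
  have key := norm_sub_inner_div_smul_le_of_laplacian (isHermitian_iff_isSymm.1 hL.isHermitian)
    hL1 hgap hz hsum hcard hM₁ hM₂ hcond
  have hdenom : 0 < ‖φ‖ * lam2 - M₂ - M₁ * M₂ ^ 2 := by linarith
  have hunit : IsUnit A := isUnit_of_forall_toEuclideanCLM_apply_eq_zero fun x hx => by
    have := key x
    rw [hx, inner_zero_right, zero_div, zero_smul, sub_zero, norm_zero, mul_zero] at this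
    exact norm_le_zero_iff.1 (nonpos_of_mul_nonpos_right this hdenom)
  refine ⟨hunit, ContinuousLinearMap.opNorm_le_bound _ (by positivity) fun y => ?_⟩
  have hy := toEuclideanCLM_apply_toEuclideanCLM_inv hunit y
  have hres : toEuclideanCLM (𝕜 := ℂ) (A⁻¹ - (gbar / n) • allOnes n) y
      = toEuclideanCLM (𝕜 := ℂ) A⁻¹ y - (⟪onesVec (Fin n), y⟫_ℂ / ∑ i, z i) • onesVec (Fin n) := by
    rw [map_sub, map_smul, _root_.sub_apply, _root_.smul_apply, toEuclideanCLM_allOnes, smul_smul,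
      hgbar, show ((n : ℂ)⁻¹ * ∑ i, z i)⁻¹ / n = (∑ i, z i)⁻¹ by field_simp, inv_mul_eq_div]
  have hx := key (toEuclideanCLM (𝕜 := ℂ) A⁻¹ y)
  rw [hy] at hx
  rw [hres, div_mul_eq_mul_div, le_div_iff₀ hdenom]
  linarith

/-- Lemma 1 of the paper. -/
theorem stmt_0 {n : ℕ} (hn : 2 ≤ n)
    (L : Matrix (Fin n) (Fin n) ℝ) (hL : L.PosSemidef)
    (hL1 : L.mulVec (fun _ => 1) = 0)
    (lam2 : ℝ) (hlam2 : 0 < lam2)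
    (hgap : ∀ x : Fin n → ℂ, (∑ i, x i = 0) →
      lam2 * ∑ i, ‖x i‖ ^ 2 ≤ (star x ⬝ᵥ (L.map (Complex.ofReal)).mulVec x).re)
    (z : Fin n → ℂ) (M₁ M₂ : ℝ) (hM₁ : 0 < M₁) (hM₂ : 0 < M₂)
    (hz : ∀ i, ‖z i‖ ≤ M₂) (hsum : ∑ i, z i ≠ 0)
    (gbar : ℂ) (hgbar : gbar = ((n : ℂ)⁻¹ * ∑ i, z i)⁻¹) (hgbarbd : ‖gbar‖ ≤ M₁)
    (φ : ℂ) (hcond : M₂ + M₁ * M₂ ^ 2 < ‖φ‖ * lam2) :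
    IsUnit (Matrix.diagonal z + φ • L.map (Complex.ofReal)) ∧
      specNorm ((Matrix.diagonal z + φ • L.map (Complex.ofReal))⁻¹
          - (gbar / n) • allOnes n)
        ≤ (M₁ * M₂ + 1) ^ 2 / (‖φ‖ * lam2 - M₂ - M₁ * M₂ ^ 2) :=
  stmt_0_general hn L hL hL1 lam2 hgap z M₁ M₂ hz hsum gbar hgbar hgbarbd φ hcond
end

section
/- Let n ≥ 1 and ε > 0. Let z₁,…,zₙ ∈ ℂ be nonzero and output strictly passive values: Re(zᵢ) ≥ ε|zᵢ|² for all i. Let w ∈ ℂ with Re(w) ≥ 0, and let L be an n×n real symmetric positive semidefinite matrix. Then: (a) the matrix M := diag(z₁⁻¹,…,zₙ⁻¹) + w·L (with L coerced to ℂ) is invertible and ‖M⁻¹‖ ≤ 2/ε; and (b) ∑ᵢ zᵢ⁻¹ ≠ 0 and |((1/n)∑ᵢ zᵢ⁻¹)⁻¹| ≤ 2/ε. -/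
/-!
Since Re zᵢ⁻¹ = Re zᵢ / |zᵢ|² ≥ ε and Re ⟪x, w L x⟫ = Re w · ⟪x, L x⟫ ≥ 0, the matrix
M = diag(zᵢ⁻¹) + w L satisfies ε ‖x‖² ≤ Re ⟪x, M x⟫ ≤ ‖x‖ ‖M x‖. So M is injective, hence
invertible, with ‖M⁻¹‖ ≤ 1/ε. In the same way the mean of the zᵢ⁻¹ has real part at least ε, so
its inverse has modulus at most 1/ε.
-/

open Matrix Complex

open scoped MatrixOrder ComplexOrder InnerProductSpace

theorem mul_norm_le_norm_of_mul_sq_le_re_inner {𝕜 E : Type*} [RCLike 𝕜] [NormedAddCommGroup E]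
    [InnerProductSpace 𝕜 E] {f : E → E} {ε : ℝ} (hf : ∀ x, ε * ‖x‖ ^ 2 ≤ RCLike.re ⟪x, f x⟫_𝕜)
    (x : E) : ε * ‖x‖ ≤ ‖f x‖ := by
  rcases eq_or_ne x 0 with rfl | hx
  · simp
  have hx_pos : 0 < ‖x‖ := norm_pos_iff.mpr hx
  have : ε * ‖x‖ * ‖x‖ ≤ ‖f x‖ * ‖x‖ :=
    calc ε * ‖x‖ * ‖x‖ = ε * ‖x‖ ^ 2 := by ring
      _ ≤ RCLike.re ⟪x, f x⟫_𝕜 := hf x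
      _ ≤ ‖x‖ * ‖f x‖ := (RCLike.re_le_norm _).trans (norm_inner_le_norm x (f x))
      _ = ‖f x‖ * ‖x‖ := mul_comm _ _
  exact le_of_mul_le_mul_right this hx_pos

namespace RCLike

variable {𝕜 : Type*} [RCLike 𝕜]

theorem norm_inv_le_inv_of_le_re {u : 𝕜} {c : ℝ} (hc : 0 < c) (hu : c ≤ re u) :
    ‖u⁻¹‖ ≤ c⁻¹ := by
  rw [norm_inv]
  exact inv_anti₀ hc (hu.trans (re_le_norm u))

theorem le_re_inv_of_mul_norm_sq_le_re {z : 𝕜} (hz : z ≠ 0) {ε : ℝ} (h : ε * ‖z‖ ^ 2 ≤ re z) :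
    ε ≤ re z⁻¹ := by
  rwa [inv_re, le_div_iff₀ (normSq_pos.mpr hz), normSq_eq_def']

theorem le_re_inv_card_mul_sum {ι : Type*} [Fintype ι] [Nonempty ι] {u : ι → 𝕜} {c : ℝ}
    (hu : ∀ i, c ≤ re (u i)) : c ≤ re ((Fintype.card ι : 𝕜)⁻¹ * ∑ i, u i) := by
  have hcard : (0 : ℝ) < Fintype.card ι := by exact_mod_cast Fintype.card_pos
  have hsum : Fintype.card ι * c ≤ re (∑ i, u i) := by
    simpa using Finset.card_nsmul_le_sum Finset.univ (fun i => re (u i)) c fun i _ => hu i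
  rwa [← ofReal_natCast, ← ofReal_inv, re_ofReal_mul, le_inv_mul_iff₀ hcard]

end RCLike

section Matrix

variable {𝕜 n : Type*} [RCLike 𝕜] [Fintype n]

theorem Matrix.PosSemidef.map_ofReal {L : Matrix n n ℝ} (hL : L.PosSemidef) :
    (L.map ((↑) : ℝ → ℂ)).PosSemidef := by
  classical
  obtain ⟨B, rfl⟩ := CStarAlgebra.nonneg_iff_eq_star_mul_self.mp hL.nonneg
  have hmul : (Bᴴ * B).map ((↑) : ℝ → ℂ) = Bᴴ.map (↑) * B.map (↑) :=
    Matrix.map_mul (f := Complex.ofRealHom)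
  rw [star_eq_conjTranspose, hmul, conjTranspose_map _ fun _ => (Complex.conj_ofReal _).symm]
  exact posSemidef_conjTranspose_mul_self _

theorem Matrix.re_dotProduct_diagonal_mulVec [DecidableEq n] (d x : n → 𝕜) :
    RCLike.re (star x ⬝ᵥ diagonal d *ᵥ x) = ∑ i, RCLike.re (d i) * ‖x i‖ ^ 2 := by
  simp only [dotProduct, mulVec_diagonal, map_sum]
  refine Finset.sum_congr rfl fun i _ => ?_
  rw [Pi.star_apply, RCLike.star_def, mul_left_comm, RCLike.conj_mul, ← RCLike.ofReal_pow,
    RCLike.re_mul_ofReal]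

theorem Matrix.PosSemidef.re_dotProduct_smul_mulVec_nonneg {P : Matrix n n 𝕜} (hP : P.PosSemidef)
    {w : 𝕜} (hw : 0 ≤ RCLike.re w) (x : n → 𝕜) : 0 ≤ RCLike.re (star x ⬝ᵥ (w • P) *ᵥ x) := by
  obtain ⟨hre, him⟩ := RCLike.nonneg_iff.mp (hP.dotProduct_mulVec_nonneg x)
  rw [smul_mulVec, dotProduct_smul, smul_eq_mul, RCLike.mul_re, him, mul_zero, sub_zero]
  exact mul_nonneg hw hre

theorem Matrix.mul_sum_norm_sq_le_re_dotProduct_diagonal_add_smul_mulVec [DecidableEq n]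
    {d : n → 𝕜} {ε : ℝ} (hd : ∀ i, ε ≤ RCLike.re (d i)) {P : Matrix n n 𝕜} (hP : P.PosSemidef)
    {w : 𝕜} (hw : 0 ≤ RCLike.re w) (x : n → 𝕜) :
    ε * ∑ i, ‖x i‖ ^ 2 ≤ RCLike.re (star x ⬝ᵥ (diagonal d + w • P) *ᵥ x) := by
  rw [add_mulVec, dotProduct_add, map_add, re_dotProduct_diagonal_mulVec, Finset.mul_sum]
  have hdiag : ∀ i, ε * ‖x i‖ ^ 2 ≤ RCLike.re (d i) * ‖x i‖ ^ 2 := fun i =>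
    mul_le_mul_of_nonneg_right (hd i) (sq_nonneg _)
  linarith [Finset.sum_le_sum fun i (_ : i ∈ Finset.univ) => hdiag i,
    hP.re_dotProduct_smul_mulVec_nonneg hw x]

variable [DecidableEq n]

theorem Matrix.isUnit_and_norm_toEuclideanCLM_inv_le {A : Matrix n n 𝕜} {ε : ℝ} (hε : 0 < ε)
    (hA : ∀ x : EuclideanSpace 𝕜 n, ε * ‖x‖ ≤ ‖toEuclideanCLM (𝕜 := 𝕜) A x‖) :
    IsUnit A ∧ ‖toEuclideanCLM (𝕜 := 𝕜) A⁻¹‖ ≤ ε⁻¹ := by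
  have hunit : IsUnit A := by
    refine mulVec_injective_iff_isUnit.mp fun u v huv => sub_eq_zero.mp ?_
    have h := hA (WithLp.toLp 2 (u - v))
    rw [toEuclideanCLM_toLp, mulVec_sub, huv, sub_self, WithLp.toLp_zero, norm_zero] at h
    rw [← WithLp.toLp_eq_zero 2, ← norm_le_zero_iff]
    exact nonpos_of_mul_nonpos_right h hε
  refine ⟨hunit, ContinuousLinearMap.opNorm_le_bound _ (inv_nonneg.mpr hε.le) fun y => ?_⟩
  have hright : toEuclideanCLM (𝕜 := 𝕜) A (toEuclideanCLM (𝕜 := 𝕜) A⁻¹ y) = y := by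
    change (toEuclideanCLM (𝕜 := 𝕜) A * toEuclideanCLM (𝕜 := 𝕜) A⁻¹) y = y
    rw [← map_mul, mul_nonsing_inv _ ((isUnit_iff_isUnit_det A).mp hunit), map_one]
    rfl
  have h := hA (toEuclideanCLM (𝕜 := 𝕜) A⁻¹ y)
  rwa [hright, mul_comm, ← le_div_iff₀ hε, ← inv_mul_eq_div] at h

theorem Matrix.isUnit_and_norm_toEuclideanCLM_inv_le_of_coercive {A : Matrix n n 𝕜} {ε : ℝ}
    (hε : 0 < ε) (hA : ∀ x : n → 𝕜, ε * ∑ i, ‖x i‖ ^ 2 ≤ RCLike.re (star x ⬝ᵥ A *ᵥ x)) :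
    IsUnit A ∧ ‖toEuclideanCLM (𝕜 := 𝕜) A⁻¹‖ ≤ ε⁻¹ := by
  refine isUnit_and_norm_toEuclideanCLM_inv_le hε
    (mul_norm_le_norm_of_mul_sq_le_re_inner (𝕜 := 𝕜) fun x => ?_)
  rw [EuclideanSpace.norm_sq_eq, EuclideanSpace.inner_eq_star_dotProduct, dotProduct_comm]
  exact hA x.ofLp

end Matrix

/-- pointwise content of Theorem 5 (passivity implies uniform bounds). -/
theorem stmt_3 {n : ℕ} (hn : 1 ≤ n) (ε : ℝ) (hε : 0 < ε)
    (z : Fin n → ℂ) (hz0 : ∀ i, z i ≠ 0)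
    (hosp : ∀ i, ε * ‖z i‖ ^ 2 ≤ (z i).re)
    (w : ℂ) (hw : 0 ≤ w.re)
    (L : Matrix (Fin n) (Fin n) ℝ) (hL : L.PosSemidef) :
    (IsUnit (Matrix.diagonal (fun i => (z i)⁻¹) + w • L.map (Complex.ofReal)) ∧
      specNorm (Matrix.diagonal (fun i => (z i)⁻¹) + w • L.map (Complex.ofReal))⁻¹ ≤ 2 / ε) ∧
    ((∑ i, (z i)⁻¹ ≠ 0) ∧ ‖((n : ℂ)⁻¹ * ∑ i, (z i)⁻¹)⁻¹‖ ≤ 2 / ε) := by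
  have hinv : ∀ i, ε ≤ RCLike.re (z i)⁻¹ := fun i =>
    RCLike.le_re_inv_of_mul_norm_sq_le_re (hz0 i) (hosp i)
  have hε2 : ε⁻¹ ≤ 2 / ε := by rw [inv_eq_one_div]; gcongr; norm_num
  obtain ⟨hunit, hnorm⟩ := isUnit_and_norm_toEuclideanCLM_inv_le_of_coercive hε
    (mul_sum_norm_sq_le_re_dotProduct_diagonal_add_smul_mulVec hinv hL.map_ofReal hw)
  have : Nonempty (Fin n) := ⟨⟨0, hn⟩⟩
  have havg := RCLike.le_re_inv_card_mul_sum hinv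
  rw [Fintype.card_fin] at havg
  have hsum : ∑ i, (z i)⁻¹ ≠ 0 := by
    intro h
    rw [h, mul_zero, map_zero] at havg
    linarith
  exact ⟨⟨hunit, hnorm.trans hε2⟩, hsum,
    (RCLike.norm_inv_le_inv_of_le_re hε havg).trans hε2⟩
end

section
/- Let S ⊂ ℂ be a nonempty compact set and let (Ω, ℱ, ℙ) be a probability space. Let X : ℕ → Ω → C(S, ℂ) be a sequence of measurable random variables with values in the space C(S,ℂ) of continuous functions on S with the sup norm, which are mutually independent and identically distributed. Assume there exist M₁, M₂, K > 0 such that for all i, n ≥ 1, ω ∈ Ω, and s, s₁, s₂ ∈ S: (i) |X i ω s| ≤ M₂; (ii) |(1/n)∑_{i=0}^{n−1} X i ω s| ≥ 1/M₁; (iii) |X i ω s₁ − X i ω s₂| ≤ K|s₁ − s₂|. Define ĥ(s) := ∫_Ω X 0 ω s dℙ(ω) and assume ĥ(s) ≠ 0 for all s ∈ S. Then for every ε > 0, ℙ{ω : sup_{s∈S} |((1/n)∑_{i=0}^{n−1} X i ω s)⁻¹ − ĥ(s)⁻¹| ≥ ε} → 0 as n → ∞. -/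
open MeasureTheory ProbabilityTheory Filter Topology

/-! The strong law of large numbers in the Banach space `C(S, ℂ)` makes the empirical
mean `n⁻¹ ∑ Xᵢ` converge almost surely, hence in probability, to `ĥ` in the sup norm. Since the
empirical means are bounded away from `0` by `1 / M₁` and `ĥ` is bounded away from `0` by
compactness, inversion is uniformly Lipschitz on the relevant values:
`‖a⁻¹ - b⁻¹‖ = ‖a - b‖ / (‖a‖ ‖b‖)`, which transfers the convergence to the reciprocals. -/

lemma norm_inv_sub_inv_le {𝕜 : Type*} [NormedDivisionRing 𝕜] {a b : 𝕜} {M δ : ℝ}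
    (hM : 0 < M) (hδ : 0 < δ) (ha : 1 / M ≤ ‖a‖) (hb : δ ≤ ‖b‖) :
    ‖a⁻¹ - b⁻¹‖ ≤ M / δ * ‖a - b‖ := by
  have ha₀ : a ≠ 0 := norm_pos_iff.mp ((one_div_pos.mpr hM).trans_le ha)
  have hb₀ : b ≠ 0 := norm_pos_iff.mp (hδ.trans_le hb)
  have ha' : ‖a⁻¹‖ ≤ M := by
    rw [norm_inv]; exact inv_le_of_inv_le₀ hM (by rwa [one_div] at ha)
  have hb' : ‖b⁻¹‖ ≤ δ⁻¹ := by rw [norm_inv]; exact inv_anti₀ hδ hb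
  calc ‖a⁻¹ - b⁻¹‖ = ‖a⁻¹‖ * ‖a - b‖ * ‖b⁻¹‖ := by
        rw [inv_sub_inv' ha₀ hb₀, norm_mul, norm_mul, norm_sub_rev]
    _ ≤ M * ‖a - b‖ * δ⁻¹ := by gcongr
    _ = M / δ * ‖a - b‖ := by ring

namespace ContinuousMap

variable {α : Type*} [TopologicalSpace α] [CompactSpace α]

lemma exists_pos_forall_le_norm {E : Type*} [NormedAddCommGroup E] (f : C(α, E))
    (hf : ∀ x, f x ≠ 0) : ∃ δ > 0, ∀ x, δ ≤ ‖f x‖ := by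
  rcases isEmpty_or_nonempty α with hα | hα
  · exact ⟨1, one_pos, isEmptyElim⟩
  obtain ⟨x₀, -, hx₀⟩ :=
    isCompact_univ.exists_isMinOn Set.univ_nonempty f.continuous.norm.continuousOn
  exact ⟨‖f x₀‖, norm_pos_iff.mpr (hf x₀), fun x => hx₀ (Set.mem_univ x)⟩

lemma iSup_norm_inv_sub_inv_le {𝕜 : Type*} [NormedDivisionRing 𝕜] {f g : C(α, 𝕜)} {M δ : ℝ}
    (hM : 0 < M) (hδ : 0 < δ) (hf : ∀ x, 1 / M ≤ ‖f x‖) (hg : ∀ x, δ ≤ ‖g x‖) :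
    ⨆ x, ‖(f x)⁻¹ - (g x)⁻¹‖ ≤ M / δ * ‖f - g‖ :=
  Real.iSup_le (fun x => (norm_inv_sub_inv_le hM hδ (hf x) (hg x)).trans <|
      by gcongr; exact norm_coe_le_norm (f - g) x)
    (by positivity)

lemma integrable_of_forall_norm_apply_le {Ω E : Type*} [MeasurableSpace Ω] {μ : Measure Ω}
    [IsFiniteMeasure μ] [NormedAddCommGroup E] {f : Ω → C(α, E)}
    (hf : AEStronglyMeasurable f μ) (C : ℝ) (hC : ∀ ω x, ‖f ω x‖ ≤ C) : Integrable f μ :=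
  Integrable.of_bound hf (max C 0) <| .of_forall fun ω =>
    (norm_le _ (le_max_right C 0)).mpr fun x => (hC ω x).trans (le_max_left C 0)

end ContinuousMap

section WeakLaw

variable {Ω E : Type*} [MeasurableSpace Ω] {μ : Measure Ω} [IsFiniteMeasure μ]
  [NormedAddCommGroup E] [NormedSpace ℝ E] [CompleteSpace E] [MeasurableSpace E] [BorelSpace E]

theorem tendstoInMeasure_inv_smul_sum (X : ℕ → Ω → E) (hint : Integrable (X 0) μ)
    (hindep : Pairwise fun i j => IndepFun (X i) (X j) μ) (hident : ∀ i, IdentDistrib (X i) (X 0) μ μ) :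
    TendstoInMeasure μ (fun (n : ℕ) ω => (n : ℝ)⁻¹ • ∑ i ∈ Finset.range n, X i ω) atTop
      (fun _ => μ[X 0]) := by
  refine tendstoInMeasure_of_tendsto_ae (fun n => ?_) (strong_law_ae X hint hindep hident)
  have hX : ∀ i, AEStronglyMeasurable (X i) μ :=
    fun i => ((hident i).symm.integrable_snd hint).aestronglyMeasurable
  exact (Finset.aestronglyMeasurable_fun_sum _ fun i _ => hX i).const_smul _

end WeakLaw

theorem tendsto_measure_le_of_tendstoInMeasure {ι Ω E : Type*} [MeasurableSpace Ω]
    {μ : Measure Ω} [SeminormedAddCommGroup E] {l : Filter ι} {f : ι → Ω → E} {g : Ω → E}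
    {F : ι → Ω → ℝ} {C ε : ℝ} (hC : 0 < C) (hε : 0 < ε) (hf : TendstoInMeasure μ f l g)
    (hF : ∀ᶠ i in l, ∀ ω, F i ω ≤ C * ‖f i ω - g ω‖) :
    Tendsto (fun i => μ {ω | ε ≤ F i ω}) l (𝓝 0) := by
  refine tendsto_of_tendsto_of_tendsto_of_le_of_le' tendsto_const_nhds
    (tendstoInMeasure_iff_norm.mp hf (ε / C) (div_pos hε hC)) (.of_forall fun _ => zero_le) ?_
  filter_upwards [hF] with i hi
  refine measure_mono fun ω (hω : ε ≤ F i ω) => ?_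
  show ε / C ≤ ‖f i ω - g ω‖
  rw [div_le_iff₀' hC]
  exact hω.trans (hi ω)

theorem stmt_5_general (S : Set ℂ) (hS : IsCompact S)
    {Ω : Type*} [MeasurableSpace Ω] (P : Measure Ω) [IsProbabilityMeasure P]
    [MeasurableSpace C(↥S, ℂ)] [BorelSpace C(↥S, ℂ)]
    (X : ℕ → Ω → C(↥S, ℂ))
    (hmeas : ∀ i, Measurable (X i))
    (hindep : iIndepFun X P)
    (hident : ∀ i, IdentDistrib (X i) (X 0) P P)
    (M₁ M₂ : ℝ) (hM₁ : 0 < M₁)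
    (hbd : ∀ (i : ℕ) (ω : Ω) (s : ↥S), ‖X i ω s‖ ≤ M₂)
    (hmean : ∀ (n : ℕ), 1 ≤ n → ∀ (ω : Ω) (s : ↥S),
      1 / M₁ ≤ ‖(n : ℂ)⁻¹ * ∑ i ∈ Finset.range n, X i ω s‖)
    (hhat : ∀ s : ↥S, (∫ ω, X 0 ω s ∂P) ≠ 0)
    (ε : ℝ) (hε : 0 < ε) :
    Tendsto (fun n : ℕ =>
        P {ω | ε ≤ ⨆ s : ↥S,
            ‖((n : ℂ)⁻¹ * ∑ i ∈ Finset.range n, X i ω s)⁻¹ - (∫ ω', X 0 ω' s ∂P)⁻¹‖})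
      atTop (𝓝 0) := by
  have : CompactSpace S := isCompact_iff_compactSpace.mp hS
  have hint : Integrable (X 0) P :=
    ContinuousMap.integrable_of_forall_norm_apply_le (hmeas 0).aestronglyMeasurable M₂ (hbd 0)
  have hĥ (s : S) : ∫ ω, X 0 ω s ∂P = (∫ ω, X 0 ω ∂P) s :=
    (ContinuousMap.integral_apply hint s).symm
  have hmean_eval (n : ℕ) (ω : Ω) (s : S) :
      (n : ℂ)⁻¹ * ∑ i ∈ Finset.range n, X i ω s = ((n : ℝ)⁻¹ • ∑ i ∈ Finset.range n, X i ω) s := by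
    simp [Complex.real_smul]
  obtain ⟨δ, hδ, hδĥ⟩ :=
    (∫ ω, X 0 ω ∂P).exists_pos_forall_le_norm fun s => hĥ s ▸ hhat s
  refine tendsto_measure_le_of_tendstoInMeasure (div_pos hM₁ hδ) hε
    (tendstoInMeasure_inv_smul_sum X hint (fun i j hij => hindep.indepFun hij) hident) ?_
  filter_upwards [eventually_ge_atTop 1] with n hn ω
  simp only [hĥ, hmean_eval]
  exact ContinuousMap.iSup_norm_inv_sub_inv_le hM₁ hδ
    (fun s => hmean_eval n ω s ▸ hmean n hn ω s) hδĥ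

/-- Lemma 8 of the paper, uniform convergence in probability of the
coherent dynamics (harmonic mean of random node dynamics) to its harmonic expectation. -/
theorem stmt_5 (S : Set ℂ) (hS : IsCompact S) (hSne : S.Nonempty)
    {Ω : Type*} [MeasurableSpace Ω] (P : Measure Ω) [IsProbabilityMeasure P]
    [MeasurableSpace C(↥S, ℂ)] [BorelSpace C(↥S, ℂ)]
    (X : ℕ → Ω → C(↥S, ℂ))
    (hmeas : ∀ i, Measurable (X i))
    (hindep : iIndepFun X P)
    (hident : ∀ i, IdentDistrib (X i) (X 0) P P)
    (M₁ M₂ K : ℝ) (hM₁ : 0 < M₁) (hM₂ : 0 < M₂) (hK : 0 < K)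
    (hbd : ∀ (i : ℕ) (ω : Ω) (s : ↥S), ‖X i ω s‖ ≤ M₂)
    (hmean : ∀ (n : ℕ), 1 ≤ n → ∀ (ω : Ω) (s : ↥S),
      1 / M₁ ≤ ‖(n : ℂ)⁻¹ * ∑ i ∈ Finset.range n, X i ω s‖)
    (hlip : ∀ (i : ℕ) (ω : Ω) (s₁ s₂ : ↥S),
      ‖X i ω s₁ - X i ω s₂‖ ≤ K * ‖(s₁ : ℂ) - (s₂ : ℂ)‖)
    (hhat : ∀ s : ↥S, (∫ ω, X 0 ω s ∂P) ≠ 0)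
    (ε : ℝ) (hε : 0 < ε) :
    Tendsto (fun n : ℕ =>
        P {ω | ε ≤ ⨆ s : ↥S,
            ‖((n : ℂ)⁻¹ * ∑ i ∈ Finset.range n, X i ω s)⁻¹ - (∫ ω', X 0 ω' s ∂P)⁻¹‖})
      atTop (𝓝 0) :=
  stmt_5_general S hS P X hmeas hindep hident M₁ M₂ hM₁ hbd hmean hhat ε hε
end

section
/- Let n ≥ 2, let V be an n×n real orthogonal matrix (VᵀV = I) whose 0-th column equals (1/√n)𝟙, let λ : Fin n → ℝ with λ 0 = 0, and set L := V·diag(λ)·Vᵀ. Let g, φ ∈ ℂ with g ≠ 0 and 1 + gφλᵢ ≠ 0 for every i. Then the complex matrix I + gφ·L (with L coerced to ℂ) is invertible and (I + gφ·L)⁻¹ · (g·I) = (g/n)·𝟙𝟙ᵀ + V·diag(d)·Vᵀ, where d 0 = 0 and dᵢ = (g⁻¹ + φλᵢ)⁻¹ for i ≠ 0 (all matrices over ℂ, V coerced to ℂ). -/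
open Matrix Complex

/-! Conjugating by an orthogonal `W` turns `L = W diag(λ) Wᵀ` into a diagonal matrix, so
`(1 + gφL)⁻¹ g = W diag(g / (1 + gφλᵢ)) Wᵀ`. Because `λ₀ = 0` and the 0-th column of `W` is
`𝟙/√n`, the 0-th diagonal entry contributes the rank-one term `g 𝟙𝟙ᵀ / n`, and the remaining
entries are `g / (1 + gφλᵢ) = (g⁻¹ + φλᵢ)⁻¹`. -/

theorem mul_inv_one_add_mul {K : Type*} [Field K] {a : K} (ha : a ≠ 0) (b : K) :
    a * (1 + a * b)⁻¹ = (a⁻¹ + b)⁻¹ := by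
  rw [show a⁻¹ + b = a⁻¹ * (1 + a * b) by field_simp, mul_inv, inv_inv]

theorem ofReal_one_div_sqrt_mul_mul_self {x : ℝ} (hx : 0 ≤ x) (z : ℂ) :
    ((1 / √x : ℝ) : ℂ) * z * ((1 / √x : ℝ) : ℂ) = z / x := by
  have hsqrt : ((√x : ℝ) : ℂ) * ((√x : ℝ) : ℂ) = x := by
    rw [← ofReal_mul, Real.mul_self_sqrt hx]
  rw [← hsqrt, ofReal_div, ofReal_one, one_div, mul_comm _ z, mul_assoc, ← mul_inv,
    div_eq_mul_inv]

namespace Matrix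

variable {ι R : Type*} [Fintype ι] [DecidableEq ι]

section CommRing

variable [CommRing R]

theorem conj_diagonal_mul_conj_diagonal {W : Matrix ι ι R} (hW : Wᵀ * W = 1) (a b : ι → R) :
    W * diagonal a * Wᵀ * (W * diagonal b * Wᵀ) = W * diagonal (a * b) * Wᵀ := by
  calc W * diagonal a * Wᵀ * (W * diagonal b * Wᵀ)
      = W * diagonal a * (Wᵀ * W) * diagonal b * Wᵀ := by simp only [Matrix.mul_assoc]
    _ = W * diagonal (a * b) * Wᵀ := by
      rw [hW, Matrix.mul_one, Matrix.mul_assoc W, diagonal_mul_diagonal]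
      rfl

theorem one_add_smul_conj_diagonal {W : Matrix ι ι R} (hW : W * Wᵀ = 1) (r : R) (a : ι → R) :
    1 + r • (W * diagonal a * Wᵀ) = W * diagonal (fun i => 1 + r * a i) * Wᵀ := by
  calc 1 + r • (W * diagonal a * Wᵀ) = W * (1 + r • diagonal a) * Wᵀ := by
        rw [Matrix.mul_add, Matrix.add_mul, Matrix.mul_one, hW, Matrix.mul_smul, Matrix.smul_mul]
    _ = W * diagonal (fun i => 1 + r * a i) * Wᵀ := by
        rw [← diagonal_smul, ← diagonal_one, diagonal_add]
        rfl

theorem conj_diagonal_single_apply (W : Matrix ι ι R) (k : ι) (x : R) (i j : ι) :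
    (W * diagonal (Pi.single k x) * Wᵀ) i j = W i k * x * W j k := by
  rw [mul_apply, Finset.sum_eq_single k]
  · simp
  · intro b _ hb
    simp [hb]
  · simp

theorem conj_diagonal_single_of_col_eq {W : Matrix ι ι R} {k : ι} {c : R} (hc : ∀ i, W i k = c)
    (x : R) : W * diagonal (Pi.single k x) * Wᵀ = (c * x * c) • of fun _ _ => 1 := by
  ext i j
  rw [conj_diagonal_single_apply, hc, hc, smul_apply, of_apply, smul_eq_mul, mul_one]

theorem map_conj_diagonal {S : Type*} [CommRing S] (f : R →+* S) (W : Matrix ι ι R) (a : ι → R) :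
    (W * diagonal a * Wᵀ).map f = W.map f * diagonal (fun i => f (a i)) * (W.map f)ᵀ := by
  rw [Matrix.map_mul, Matrix.map_mul, diagonal_map (map_zero f), transpose_map]

theorem map_transpose_mul_self_eq_one {S : Type*} [CommRing S] (f : R →+* S) {W : Matrix ι ι R}
    (hW : Wᵀ * W = 1) : (W.map f)ᵀ * W.map f = 1 := by
  rw [← transpose_map, ← Matrix.map_mul, hW, Matrix.map_one f (map_zero f) (map_one f)]

end CommRing

theorem conj_diagonal_mul_conj_diagonal_inv {K : Type*} [Field K] {W : Matrix ι ι K}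
    (hW : Wᵀ * W = 1) {a : ι → K} (ha : ∀ i, a i ≠ 0) :
    W * diagonal a * Wᵀ * (W * diagonal a⁻¹ * Wᵀ) = 1 := by
  have hainv : a * a⁻¹ = 1 := funext fun i => mul_inv_cancel₀ (ha i)
  rw [conj_diagonal_mul_conj_diagonal hW, hainv, diagonal_one', Matrix.mul_one,
    mul_eq_one_comm.mp hW]

end Matrix

/-- equation (4) of the paper, decomposition of the homogeneous
network transfer matrix. -/
theorem stmt_7 {n : ℕ} (hn : 2 ≤ n)
    (V : Matrix (Fin n) (Fin n) ℝ) (hV : Vᵀ * V = 1)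
    (hV0 : ∀ i : Fin n, V i ⟨0, by omega⟩ = 1 / Real.sqrt n)
    (lam : Fin n → ℝ) (hlam0 : lam ⟨0, by omega⟩ = 0)
    (g φ : ℂ) (hg : g ≠ 0)
    (hpole : ∀ i : Fin n, (1 : ℂ) + g * φ * (lam i : ℂ) ≠ 0) :
    IsUnit ((1 : Matrix (Fin n) (Fin n) ℂ)
        + (g * φ) • (V * Matrix.diagonal lam * Vᵀ).map (Complex.ofReal)) ∧
    ((1 : Matrix (Fin n) (Fin n) ℂ)
        + (g * φ) • (V * Matrix.diagonal lam * Vᵀ).map (Complex.ofReal))⁻¹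
      * (g • (1 : Matrix (Fin n) (Fin n) ℂ))
    = (g / n) • allOnes n
      + (V.map Complex.ofReal)
        * Matrix.diagonal (fun i : Fin n =>
            if i = (⟨0, by omega⟩ : Fin n) then 0 else (g⁻¹ + φ * (lam i : ℂ))⁻¹)
        * (V.map Complex.ofReal)ᵀ := by
  set i₀ : Fin n := ⟨0, by omega⟩
  set W : Matrix (Fin n) (Fin n) ℂ := V.map Complex.ofReal
  have hW : Wᵀ * W = 1 := map_transpose_mul_self_eq_one ofRealHom hV
  have hL : (V * diagonal lam * Vᵀ).map ofReal = W * diagonal (fun i => (lam i : ℂ)) * Wᵀ :=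
    map_conj_diagonal ofRealHom V lam
  have hAB := conj_diagonal_mul_conj_diagonal_inv hW hpole
  rw [hL, one_add_smul_conj_diagonal (mul_eq_one_comm.mp hW) (g * φ)]
  refine ⟨IsUnit.of_mul_eq_one _ hAB, ?_⟩
  rw [inv_eq_right_inv hAB, Matrix.mul_smul, Matrix.mul_one, ← Matrix.smul_mul,
    ← Matrix.mul_smul, ← diagonal_smul]
  have hsplit : g • (fun i => 1 + g * φ * (lam i : ℂ))⁻¹ = fun i =>
      (Pi.single i₀ g : Fin n → ℂ) i + if i = i₀ then 0 else (g⁻¹ + φ * (lam i : ℂ))⁻¹ := by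
    funext i
    by_cases hi : i = i₀
    · subst hi
      simp [hlam0]
    · simp only [Pi.smul_apply, Pi.inv_apply, Pi.single_apply, hi, if_false, zero_add,
        smul_eq_mul, mul_assoc, mul_inv_one_add_mul hg]
  have hW₀ : ∀ i, W i i₀ = ((1 / √n : ℝ) : ℂ) := fun i => congrArg ofReal (hV0 i)
  rw [hsplit, ← diagonal_add, Matrix.mul_add, Matrix.add_mul,
    conj_diagonal_single_of_col_eq hW₀, ofReal_one_div_sqrt_mul_mul_self n.cast_nonneg,
    ofReal_natCast]
  rfl
end

section
/- For all real α > 0 and K ≥ 0, ∫_{Kα}^{∞} α/√(4α⁴ + ω⁴) dω ≤ π/2 − arctan(K/√2). -/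
/-!
Since `a + b ≤ √2 · √(a² + b²)`, taking `a = 2α²` and `b = ω²` bounds the integrand by
`c / (c² + ω²)` with `c = √2 α`, a rescaled Cauchy density whose tail integral over
`(Kα, ∞)` is `π/2 - arctan (Kα / c) = π/2 - arctan (K / √2)`.
-/

open Real MeasureTheory Set Filter

theorem add_le_sqrt_two_mul_sqrt_sq_add_sq (a b : ℝ) : a + b ≤ √2 * √(a ^ 2 + b ^ 2) := by
  rw [← sqrt_mul zero_le_two]
  apply le_sqrt_of_sq_le
  nlinarith [sq_nonneg (a - b)]

section CauchyTail

variable {c : ℝ}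

theorem hasDerivAt_arctan_div (hc : c ≠ 0) (x : ℝ) :
    HasDerivAt (fun x => arctan (x / c)) (c / (c ^ 2 + x ^ 2)) x := by
  refine ((hasDerivAt_arctan (x / c)).comp x ((hasDerivAt_id x).div_const c)).congr_deriv ?_
  field_simp

theorem tendsto_arctan_div_atTop (hc : 0 < c) :
    Tendsto (fun x => arctan (x / c)) atTop (nhds (π / 2)) :=
  (tendsto_arctan_atTop.comp (tendsto_id.atTop_div_const hc)).mono_right nhdsWithin_le_nhds

theorem integrableOn_Ioi_div_sq_add_sq (hc : 0 < c) (a : ℝ) :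
    IntegrableOn (fun x => c / (c ^ 2 + x ^ 2)) (Ioi a) :=
  integrableOn_Ioi_deriv_of_nonneg' (fun x _ => hasDerivAt_arctan_div hc.ne' x)
    (fun _ _ => by positivity) (tendsto_arctan_div_atTop hc)

theorem integral_Ioi_div_sq_add_sq (hc : 0 < c) (a : ℝ) :
    ∫ x in Ioi a, c / (c ^ 2 + x ^ 2) = π / 2 - arctan (a / c) :=
  integral_Ioi_of_hasDerivAt_of_nonneg' (fun x _ => hasDerivAt_arctan_div hc.ne' x)
    (fun _ _ => by positivity) (tendsto_arctan_div_atTop hc)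

end CauchyTail

theorem div_sqrt_four_mul_pow_four_add_pow_four_le {α : ℝ} (hα : 0 < α) (ω : ℝ) :
    α / √(4 * α ^ 4 + ω ^ 4) ≤ √2 * α / ((√2 * α) ^ 2 + ω ^ 2) := by
  have hsum : (√2 * α) ^ 2 + ω ^ 2 ≤ √2 * √(4 * α ^ 4 + ω ^ 4) := by
    convert add_le_sqrt_two_mul_sqrt_sq_add_sq (2 * α ^ 2) (ω ^ 2) using 3
    · rw [mul_pow, sq_sqrt zero_le_two]
    · ring
  have hroot : 0 < √(4 * α ^ 4 + ω ^ 4) := sqrt_pos.mpr (by positivity)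
  rw [div_le_div_iff₀ hroot (by positivity)]
  calc α * ((√2 * α) ^ 2 + ω ^ 2) ≤ α * (√2 * √(4 * α ^ 4 + ω ^ 4)) := by gcongr
    _ = √2 * α * √(4 * α ^ 4 + ω ^ 4) := by ring

theorem stmt_14_general (α K : ℝ) (hα : 0 < α) :
    ∫ ω in Set.Ioi (K * α), α / Real.sqrt (4 * α ^ 4 + ω ^ 4)
      ≤ π / 2 - Real.arctan (K / Real.sqrt 2) := by
  have hc : 0 < √2 * α := by positivity
  calc ∫ ω in Ioi (K * α), α / √(4 * α ^ 4 + ω ^ 4)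
      ≤ ∫ ω in Ioi (K * α), √2 * α / ((√2 * α) ^ 2 + ω ^ 2) :=
        integral_mono_of_nonneg (.of_forall fun _ => by positivity)
          (integrableOn_Ioi_div_sq_add_sq hc _)
          (.of_forall (div_sqrt_four_mul_pow_four_add_pow_four_le hα))
    _ = π / 2 - arctan (K / √2) := by
        rw [integral_Ioi_div_sq_add_sq hc, mul_div_mul_right _ _ hα.ne']

/-- bound on the high-frequency tail integral in the proof of
Theorem 6. -/
theorem stmt_14 (α K : ℝ) (hα : 0 < α) (hK : 0 ≤ K) :
    ∫ ω in Set.Ioi (K * α), α / Real.sqrt (4 * α ^ 4 + ω ^ 4)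
      ≤ π / 2 - Real.arctan (K / Real.sqrt 2) :=
  stmt_14_general α K hα
end

section
/- Let γ, C, δ > 0 and let E : ℂ → ℝ satisfy: (i) 0 ≤ E(s) ≤ 2γ for every s with Re(s) > 0; (ii) E(s) ≤ C·|s| for every s with Re(s) > 0 and |s| ≤ δ; (iii) for every α > 0 the function ω ↦ E(α + iω) is measurable on ℝ. Then for every ε > 0 there exists α₀ ∈ (0, log 2] such that for every α with 0 < α ≤ α₀, (e^α/(2π))·∫_ℝ E(α + iω)·(α/√(4α⁴ + ω⁴)) dω ≤ ε. -/
/-!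
On the line `Re s = α` split the frequencies at a scale `R` with `2R ≤ δ`. For `|ω| ≤ R` the
Lipschitz bound `E(s) ≤ C |s| ≤ C (α + |ω|)` exactly compensates the weight, which is at most
`1 / (α + |ω|)`; for `|ω| > R` the weight is at most `α / ω²` and `E ≤ 2γ`. Both cases give a
Cauchy-kernel bound `(2 C R² + 4 γ α) / (R² + ω²)`, whose integral is `π (2 C R + 4 γ α / R)`.
Choosing `R` small and then `α ≪ R` makes this at most `π ε`, and `e^α ≤ 2` for `α ≤ log 2`.
-/

open Real MeasureTheory Complex

lemma inv_sq_add_sq_eq_inv_sq_mul {c : ℝ} (hc : c ≠ 0) :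
    (fun x : ℝ => (c ^ 2 + x ^ 2)⁻¹) = fun x => (c ^ 2)⁻¹ * (1 + (x * c⁻¹) ^ 2)⁻¹ := by
  funext x
  field_simp

lemma integrable_inv_sq_add_sq {c : ℝ} (hc : c ≠ 0) :
    Integrable fun x : ℝ => (c ^ 2 + x ^ 2)⁻¹ := by
  rw [inv_sq_add_sq_eq_inv_sq_mul hc]
  exact (integrable_inv_one_add_sq.comp_mul_right' (inv_ne_zero hc)).const_mul _

lemma integral_univ_inv_sq_add_sq {c : ℝ} (hc : c ≠ 0) :
    ∫ x : ℝ, (c ^ 2 + x ^ 2)⁻¹ = π / |c| := by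
  rw [inv_sq_add_sq_eq_inv_sq_mul hc, integral_const_mul,
    Measure.integral_comp_mul_right (fun x : ℝ => (1 + x ^ 2)⁻¹) c⁻¹, integral_univ_inv_one_add_sq,
    smul_eq_mul, inv_inv, ← sq_abs]
  field_simp

/-- `|α / (s² + α²)|` at `s = α + iω`, the modulus of the Laplace transform of `sin (α t)`. -/
noncomputable def sinLaplaceNorm (α ω : ℝ) : ℝ := α / √(4 * α ^ 4 + ω ^ 4)

lemma sinLaplaceNorm_nonneg {α : ℝ} (hα : 0 ≤ α) (ω : ℝ) : 0 ≤ sinLaplaceNorm α ω := by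
  unfold sinLaplaceNorm
  positivity

lemma add_abs_mul_sinLaplaceNorm_le_one {α : ℝ} (hα : 0 < α) (ω : ℝ) :
    (α + |ω|) * sinLaplaceNorm α ω ≤ 1 := by
  rw [sinLaplaceNorm, mul_div_assoc', div_le_one (Real.sqrt_pos.mpr (by positivity)),
    Real.le_sqrt (by positivity) (by positivity)]
  nlinarith [sq_abs ω, sq_nonneg (α - |ω|), sq_nonneg (α ^ 2 - ω ^ 2), mul_nonneg hα.le (abs_nonneg ω),
    mul_nonneg (sq_nonneg α) (sq_nonneg (α - |ω|))]

lemma sinLaplaceNorm_le_div_sq {α ω : ℝ} (hα : 0 ≤ α) (hω : ω ≠ 0) :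
    sinLaplaceNorm α ω ≤ α / ω ^ 2 :=
  div_le_div_of_nonneg_left hα (by positivity)
    (Real.le_sqrt_of_sq_le (by nlinarith [pow_nonneg (sq_nonneg α) 2]))

section LineIntegral

variable {γ C δ : ℝ} {E : ℂ → ℝ}

lemma mul_sinLaplaceNorm_le_of_abs_le (h2 : ∀ s : ℂ, 0 < s.re → ‖s‖ ≤ δ → E s ≤ C * ‖s‖)
    (hC : 0 ≤ C) {α R ω : ℝ} (hα : 0 < α) (hαR : α ≤ R) (hRδ : 2 * R ≤ δ) (hω : |ω| ≤ R) :
    E (α + ω * I) * sinLaplaceNorm α ω ≤ 2 * C * R ^ 2 / (R ^ 2 + ω ^ 2) := by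
  have hnorm : ‖(α : ℂ) + ω * I‖ ≤ α + |ω| := by
    simpa [abs_of_pos hα] using Complex.norm_le_abs_re_add_abs_im ((α : ℂ) + ω * I)
  have hE : E (α + ω * I) ≤ C * (α + |ω|) :=
    (h2 _ (by simpa using hα) (by linarith)).trans (mul_le_mul_of_nonneg_left hnorm hC)
  have hω2 : ω ^ 2 ≤ R ^ 2 := by nlinarith [sq_abs ω, abs_nonneg ω]
  calc E (α + ω * I) * sinLaplaceNorm α ω
      ≤ C * (α + |ω|) * sinLaplaceNorm α ω :=
        mul_le_mul_of_nonneg_right hE (sinLaplaceNorm_nonneg hα.le ω)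
    _ = C * ((α + |ω|) * sinLaplaceNorm α ω) := mul_assoc _ _ _
    _ ≤ C := mul_le_of_le_one_right hC (add_abs_mul_sinLaplaceNorm_le_one hα ω)
    _ ≤ 2 * C * R ^ 2 / (R ^ 2 + ω ^ 2) := by
        rw [le_div_iff₀ (by nlinarith)]
        nlinarith

lemma mul_sinLaplaceNorm_le_of_lt_abs (h1 : ∀ s : ℂ, 0 < s.re → 0 ≤ E s ∧ E s ≤ 2 * γ)
    (hγ : 0 ≤ γ) {α R ω : ℝ} (hα : 0 < α) (hR : 0 ≤ R) (hω : R < |ω|) :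
    E (α + ω * I) * sinLaplaceNorm α ω ≤ 4 * γ * α / (R ^ 2 + ω ^ 2) := by
  have hRω : R ^ 2 < ω ^ 2 := by nlinarith [sq_abs ω]
  have hω2 : 0 < ω ^ 2 := by nlinarith
  calc E (α + ω * I) * sinLaplaceNorm α ω
      ≤ 2 * γ * (α / ω ^ 2) :=
        mul_le_mul (h1 _ (by simpa using hα)).2
          (sinLaplaceNorm_le_div_sq hα.le (by rintro rfl; simp at hω2))
          (sinLaplaceNorm_nonneg hα.le ω) (by positivity)
    _ ≤ 4 * γ * α / (R ^ 2 + ω ^ 2) := by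
        rw [mul_div_assoc', div_le_div_iff₀ hω2 (by positivity)]
        nlinarith [mul_nonneg hγ hα.le]

lemma mul_sinLaplaceNorm_le (h1 : ∀ s : ℂ, 0 < s.re → 0 ≤ E s ∧ E s ≤ 2 * γ)
    (h2 : ∀ s : ℂ, 0 < s.re → ‖s‖ ≤ δ → E s ≤ C * ‖s‖) (hγ : 0 ≤ γ) (hC : 0 ≤ C)
    {α R : ℝ} (hα : 0 < α) (hαR : α ≤ R) (hRδ : 2 * R ≤ δ) (ω : ℝ) :
    E (α + ω * I) * sinLaplaceNorm α ω ≤ (2 * C * R ^ 2 + 4 * γ * α) / (R ^ 2 + ω ^ 2) := by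
  rw [add_div]
  rcases le_or_gt |ω| R with hω | hω
  · exact (mul_sinLaplaceNorm_le_of_abs_le h2 hC hα hαR hRδ hω).trans
      (le_add_of_nonneg_right (by positivity))
  · exact (mul_sinLaplaceNorm_le_of_lt_abs h1 hγ hα (hα.le.trans hαR) hω).trans
      (le_add_of_nonneg_left (by positivity))

lemma integral_mul_sinLaplaceNorm_le (h1 : ∀ s : ℂ, 0 < s.re → 0 ≤ E s ∧ E s ≤ 2 * γ)
    (h2 : ∀ s : ℂ, 0 < s.re → ‖s‖ ≤ δ → E s ≤ C * ‖s‖)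
    (h3 : ∀ α : ℝ, 0 < α → Measurable (fun ω : ℝ => E (α + ω * I))) (hγ : 0 ≤ γ) (hC : 0 ≤ C)
    {α R : ℝ} (hα : 0 < α) (hαR : α ≤ R) (hRδ : 2 * R ≤ δ) :
    ∫ ω : ℝ, E (α + ω * I) * sinLaplaceNorm α ω ≤ (2 * C * R ^ 2 + 4 * γ * α) * π / R := by
  have hR : 0 < R := hα.trans_le hαR
  set K := 2 * C * R ^ 2 + 4 * γ * α
  have hbound : Integrable fun ω : ℝ => K / (R ^ 2 + ω ^ 2) := by
    simpa only [div_eq_mul_inv] using (integrable_inv_sq_add_sq hR.ne').const_mul K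
  have hint : Integrable fun ω : ℝ => E (α + ω * I) * sinLaplaceNorm α ω := by
    refine hbound.mono' ((h3 α hα).mul (by unfold sinLaplaceNorm; fun_prop)).aestronglyMeasurable
      (ae_of_all _ fun ω => ?_)
    rw [Real.norm_of_nonneg
      (mul_nonneg (h1 _ (by simpa using hα)).1 (sinLaplaceNorm_nonneg hα.le ω))]
    exact mul_sinLaplaceNorm_le h1 h2 hγ hC hα hαR hRδ ω
  calc ∫ ω : ℝ, E (α + ω * I) * sinLaplaceNorm α ω
      ≤ ∫ ω : ℝ, K / (R ^ 2 + ω ^ 2) :=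
        integral_mono hint hbound (mul_sinLaplaceNorm_le h1 h2 hγ hC hα hαR hRδ)
    _ = K * π / R := by
        simp only [div_eq_mul_inv]
        rw [integral_const_mul, integral_univ_inv_sq_add_sq hR.ne', abs_of_pos hR]
        ring

end LineIntegral

/-- the key analytic estimate in the proof of Theorem 6
(coherent response to low-frequency sinusoidal inputs). -/
theorem stmt_16 (γ C δ : ℝ) (hγ : 0 < γ) (hC : 0 < C) (hδ : 0 < δ)
    (E : ℂ → ℝ)
    (h1 : ∀ s : ℂ, 0 < s.re → 0 ≤ E s ∧ E s ≤ 2 * γ)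
    (h2 : ∀ s : ℂ, 0 < s.re → ‖s‖ ≤ δ → E s ≤ C * ‖s‖)
    (h3 : ∀ α : ℝ, 0 < α → Measurable (fun ω : ℝ => E (α + ω * Complex.I))) :
    ∀ ε > 0, ∃ α₀ : ℝ, 0 < α₀ ∧ α₀ ≤ Real.log 2 ∧
      ∀ α : ℝ, 0 < α → α ≤ α₀ →
        (Real.exp α / (2 * π))
            * ∫ ω : ℝ, E (α + ω * Complex.I) * (α / Real.sqrt (4 * α ^ 4 + ω ^ 4))
          ≤ ε := by
  intro ε hε
  set R := min (δ / 2) (ε / (4 * C))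
  have hR : 0 < R := by positivity
  have hRC : 2 * C * R ≤ ε / 2 := by
    have := min_le_right (δ / 2) (ε / (4 * C))
    rw [le_div_iff₀ (by positivity)] at this
    linarith
  refine ⟨min (min R (log 2)) (ε * R / (8 * γ)), by positivity,
    (min_le_left _ _).trans (min_le_right _ _), fun α hα hαα₀ => ?_⟩
  have hαR : α ≤ R := hαα₀.trans ((min_le_left _ _).trans (min_le_left _ _))
  have hexp : Real.exp α ≤ 2 := by
    rw [← exp_log two_pos]
    exact Real.exp_le_exp.mpr (hαα₀.trans ((min_le_left _ _).trans (min_le_right _ _)))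
  have hαγ : 4 * γ * α / R ≤ ε / 2 := by
    have := hαα₀.trans (min_le_right _ _)
    rw [le_div_iff₀ (by positivity)] at this
    rw [div_le_iff₀ hR]
    linarith
  calc Real.exp α / (2 * π) * ∫ ω : ℝ, E (α + ω * I) * sinLaplaceNorm α ω
      ≤ Real.exp α / (2 * π) * ((2 * C * R ^ 2 + 4 * γ * α) * π / R) :=
        mul_le_mul_of_nonneg_left (integral_mul_sinLaplaceNorm_le h1 h2 h3 hγ.le hC.le hα hαR
          (by linarith [min_le_left (δ / 2) (ε / (4 * C))])) (by positivity)
    _ ≤ 2 / (2 * π) * ((2 * C * R ^ 2 + 4 * γ * α) * π / R) := by gcongr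
    _ = 2 * C * R + 4 * γ * α / R := by field_simp
    _ ≤ ε := by linarith
end
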